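/- Let X be a locally connected topological space and let f : X → X be a continuous map that is both open (images of open sets are open) and closed (images of closed sets are closed). Then for every connected open subset U ⊆ X and every connected component Ũ of f⁻¹(U), one has f(Ũ) = U. -/

import Mathlib

open Set Topology

/-- Let `X` be a locally connected topological space and `f : X → X`
a continuous map that is both open and closed.  Then for every connected open subset
`U ⊆ X` and every connected component `Ũ` of `f⁻¹(U)`, one has `f(Ũ) = U`. -/
theorem statement_0 {X : Type*} [TopologicalSpace X] [LocallyConnectedSpace X]
    (f : X → X) (hf : Continuous f) (hopen : IsOpenMap f) (hclosed : IsClosedMap f)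
    (U : Set X) (hUopen : IsOpen U) (hUconn : IsConnected U)
    (Ut : Set X) (hUt : ∃ x ∈ f ⁻¹' U, Ut = connectedComponentIn (f ⁻¹' U) x) :
    f '' Ut = U := by
  obtain ⟨x, hx, rfl⟩ := hUt
  set Ut := connectedComponentIn (f ⁻¹' U) x with hUtdef
  have hxUt : x ∈ Ut := mem_connectedComponentIn hx
  have hUtsub : Ut ⊆ f ⁻¹' U := connectedComponentIn_subset _ _
  have hUtconn : IsPreconnected Ut := isPreconnected_connectedComponentIn
  have hUtopen : IsOpen Ut :=
    (hUopen.preimage hf).connectedComponentIn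
  -- Ut is relatively closed in f ⁻¹' U
  have hrelclosed : closure Ut ∩ f ⁻¹' U ⊆ Ut := by
    intro z ⟨hz1, hz2⟩
    have hconn : IsPreconnected (insert z Ut) := by
      apply hUtconn.subset_closure (subset_insert _ _)
      exact insert_subset hz1 subset_closure
    have : insert z Ut ⊆ connectedComponentIn (f ⁻¹' U) x := by
      apply IsPreconnected.subset_connectedComponentIn hconn (mem_insert_of_mem _ hxUt)
      exact insert_subset hz2 hUtsub
    exact this (mem_insert _ _)
  -- key: f '' Ut = f '' (closure Ut) ∩ U
  have himg_sub : f '' Ut ⊆ U := image_subset_iff.2 hUtsub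
  have hkey : f '' Ut = f '' (closure Ut) ∩ U := by
    apply Subset.antisymm
    · exact subset_inter (image_mono subset_closure) himg_sub
    · rintro y ⟨⟨z, hz, rfl⟩, hyU⟩
      exact ⟨z, hrelclosed ⟨hz, hyU⟩, rfl⟩
  have hVclosed : IsClosed (f '' (closure Ut)) := hclosed _ isClosed_closure
  have hVopen : IsOpen (f '' Ut) := hopen _ hUtopen
  -- U ⊆ f '' Ut by connectedness of U
  have hcover : U ⊆ f '' Ut ∪ (f '' (closure Ut))ᶜ := by
    intro y hy
    by_cases h : y ∈ f '' (closure Ut)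
    · exact Or.inl (hkey ▸ ⟨h, hy⟩)
    · exact Or.inr h
  have hdisj : Disjoint (f '' Ut) (f '' (closure Ut))ᶜ := by
    rw [disjoint_compl_right_iff_subset]
    exact image_mono subset_closure
  have hUsub : U ⊆ f '' Ut := by
    apply hUconn.isPreconnected.subset_left_of_subset_union hVopen
      hVclosed.isOpen_compl hdisj hcover
    exact ⟨f x, hx, ⟨x, hxUt, rfl⟩⟩
  exact Subset.antisymm himg_sub hUsub
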